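/- Let W be a star-like domain with center 0 and 𝒜_W as defined. If f is analytic on W with limsup_{z→∂W} |f(z)| ≤ K < ∞ and |f(z)| ≤ C e^{C|z|^{2p}} + C for some C > 0 and some p < π/(2𝒜_W), then |f(z)| ≤ K on W. -/

import Mathlib

open MeasureTheory ProbabilityTheory Complex Set Filter
open scoped ENNReal NNReal

noncomputable section

/-- The law of a planar Brownian increment over a time interval of length `t`. -/
def planarGaussian (t : ℝ) : Measure ℂ :=
  Measure.map (fun p : ℝ × ℝ => ⟨p.1, p.2⟩)
    ((gaussianReal 0 t.toNNReal).prod (gaussianReal 0 t.toNNReal))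

/-- `B` is a planar Brownian motion started at `a`. -/
structure IsPlanarBM {Ω : Type} [MeasureSpace Ω] (B : ℝ → Ω → ℂ) (a : ℂ) : Prop where
  prob : IsProbabilityMeasure (ℙ : Measure Ω)
  meas : ∀ t, StronglyMeasurable (B t)
  init : ∀ᵐ ω, B 0 ω = a
  cont : ∀ᵐ ω, Continuous fun t => B t ω
  indep : ∀ (n : ℕ) (t : ℕ → ℝ), Monotone t → 0 ≤ t 0 →
    iIndepFun
      (fun i : Fin n => fun ω => B (t (i + 1)) ω - B (t i) ω) ℙ
  law : ∀ s t : ℝ, 0 ≤ s → s ≤ t →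
    Measure.map (fun ω => B t ω - B s ω) ℙ = planarGaussian (t - s)

/-- First exit time (as an extended nonnegative real) of the process `B` from `W`. -/
def exitTime {Ω : Type} (B : ℝ → Ω → ℂ) (W : Set ℂ) (ω : Ω) : ℝ≥0∞ :=
  sInf {s : ℝ≥0∞ | ∃ t : ℝ, 0 ≤ t ∧ s = ENNReal.ofReal t ∧ B t ω ∉ W}

/-- The `p`-th moment of the exit time of `B` from `W`. -/
def exitMoment {Ω : Type} [MeasureSpace Ω] (B : ℝ → Ω → ℂ) (W : Set ℂ) (p : ℝ) : ℝ≥0∞ :=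
  ∫⁻ ω, exitTime B W ω ^ p

/-- The position of `B` at the exit time from `W`. -/
def exitPos {Ω : Type} (B : ℝ → Ω → ℂ) (W : Set ℂ) (ω : Ω) : ℂ :=
  B (exitTime B W ω).toReal ω

/-- `E[T_W^p] < ∞` : the `p`-th moment of the exit time from `W` is finite, for every
Brownian motion started at a point of `W`. -/
def ExitMomentFin (W : Set ℂ) (p : ℝ) : Prop :=
  ∀ a ∈ W, ∀ (Ω : Type) (_ : MeasureSpace Ω) (B : ℝ → Ω → ℂ),
    IsPlanarBM B a → exitMoment B W p < ⊤

/-- The maximal function `B^*_τ = sup_{0 ≤ t ≤ τ} |B_t|`. -/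
def bmSup {Ω : Type} (B : ℝ → Ω → ℂ) (τ : Ω → ℝ) (ω : Ω) : ℝ≥0∞ :=
  ⨆ t : Icc (0 : ℝ) (τ ω), ENNReal.ofReal ‖B t ω‖

/-- The Hardy `H^q` norm of a function on the unit disk. -/
def hardyNorm (q : ℝ) (f : ℂ → ℂ) : ℝ≥0∞ :=
  (⨆ r : Ico (0 : ℝ) 1,
      (ENNReal.ofReal (2 * Real.pi))⁻¹ *
        ∫⁻ θ in Set.Ioc (0 : ℝ) (2 * Real.pi),
          ENNReal.ofReal ‖f (((r : ℝ) : ℂ) * Complex.exp (θ * Complex.I))‖ ^ q) ^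
    (1 / q)

/-- `f` is a Riemann map from the unit disk onto `W` sending `0` to `a`. -/
def IsRiemannMap (f : ℂ → ℂ) (W : Set ℂ) (a : ℂ) : Prop :=
  DifferentiableOn ℂ f (Metric.ball 0 1) ∧ InjOn f (Metric.ball 0 1) ∧
    f '' Metric.ball 0 1 = W ∧ f 0 = a

/-- `u` is continuous and satisfies the sub-mean value property on `W` (subharmonicity). -/
def SubharmonicOn (u : ℂ → ℝ) (W : Set ℂ) : Prop :=
  ContinuousOn u W ∧ ∀ z ∈ W, ∀ r : ℝ, 0 < r → Metric.closedBall z r ⊆ W →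
    u z ≤ (2 * Real.pi)⁻¹ * ∫ θ in (0 : ℝ)..(2 * Real.pi),
      u (z + (r : ℂ) * Complex.exp (θ * Complex.I))

/-- The angular measure of the largest subarc of `W ∩ {|z| = r}`. -/
def maxArc (W : Set ℂ) (r : ℝ) : ℝ :=
  sSup {L : ℝ | ∃ a b : ℝ, L = b - a ∧ a ≤ b ∧ b - a ≤ 2 * Real.pi ∧
    ∀ θ ∈ Set.Ioo a b, (r : ℂ) * Complex.exp (θ * Complex.I) ∈ W}

/-- The infinite wedge of opening `α` about the positive real axis. -/
def wedge (α : ℝ) : Set ℂ := {z : ℂ | z ≠ 0 ∧ |Complex.arg z| < α / 2}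


open MeasureTheory ProbabilityTheory Complex Set Filter
open scoped ENNReal NNReal Real

noncomputable section

namespace Statement12Aux

/-- membership in segment from 0 -/
lemma smul_mem_segment {x : ℂ} {t : ℝ} (ht0 : 0 ≤ t) (ht1 : t ≤ 1) :
    t • x ∈ segment ℝ 0 x := by
  refine ⟨1 - t, t, by linarith, ht0, by ring, by simp⟩

/-- The angular sector about the positive real axis is open. -/
lemma isOpen_argSector {c : ℝ} (hc : c ≤ Real.pi) :
    IsOpen {w : ℂ | w ≠ 0 ∧ |Complex.arg w| < c} := by
  rw [isOpen_iff_mem_nhds]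
  rintro w ⟨hw0, hwarg⟩
  have hslit : w ∈ Complex.slitPlane := by
    by_contra h
    simp only [Complex.mem_slitPlane_iff, not_or, not_lt, not_ne_iff] at h
    have hre : w.re < 0 := by
      rcases lt_or_eq_of_le h.1 with h' | h'
      · exact h'
      · exact absurd (show w = 0 by apply Complex.ext <;> simp [h'.symm, h.2]) hw0
    have : Complex.arg w = Real.pi := Complex.arg_eq_pi_iff.2 ⟨hre, h.2⟩
    rw [this, abs_of_pos Real.pi_pos] at hwarg
    linarith
  have h1 : ContinuousAt (fun y => |Complex.arg y|) w :=
    (Complex.continuousAt_arg hslit).abs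
  have h2 : {y : ℂ | |Complex.arg y| < c} ∈ nhds w :=
    h1.preimage_mem_nhds (Iio_mem_nhds hwarg)
  have h3 : {y : ℂ | y ≠ 0} ∈ nhds w :=
    (isOpen_compl_singleton).mem_nhds (by simpa using hw0)
  filter_upwards [h2, h3] with y hy2 hy3
  exact ⟨hy3, hy2⟩

end Statement12Aux

namespace Statement12Aux

/-- Maximum modulus principle with limsup boundary values, for bounded open sets and
bounded analytic functions. -/
lemma maxmod_limsup {U : Set ℂ} (hUo : IsOpen U) (hUb : Bornology.IsBounded U)
    {F : ℂ → ℂ} (hFd : DifferentiableOn ℂ F U) {B : ℝ}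
    (hFB : ∀ x ∈ U, norm (F x) ≤ B) {M : ℝ}
    (hbd : ∀ w ∈ frontier U, Filter.limsup (fun x => norm (F x)) (nhdsWithin w U) ≤ M)
    {z : ℂ} (hz : z ∈ U) : norm (F z) ≤ M := by
  by_contra hcon
  push_neg at hcon
  set T : ℝ := sSup ((fun x => norm (F x)) '' U) with hT
  have hne : ((fun x => norm (F x)) '' U).Nonempty := ⟨_, ⟨z, hz, rfl⟩⟩
  have hbdd : BddAbove ((fun x => norm (F x)) '' U) := by
    refine ⟨B, ?_⟩; rintro y ⟨x, hx, rfl⟩; exact hFB x hx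
  have hTz : norm (F z) ≤ T := le_csSup hbdd ⟨z, hz, rfl⟩
  have hMT : M < T := lt_of_lt_of_le hcon hTz
  have hle : ∀ x ∈ U, norm (F x) ≤ T := fun x hx => le_csSup hbdd ⟨x, hx, rfl⟩
  have hseq : ∀ n : ℕ, ∃ x ∈ U, T - 1 / (n + 1) < norm (F x) := by
    intro n
    have h1 : T - 1 / (n + 1) < T := by
      have : (0:ℝ) < 1 / (n + 1) := by positivity
      linarith
    obtain ⟨y, ⟨x, hx, rfl⟩, hy⟩ := exists_lt_of_lt_csSup hne h1
    exact ⟨x, hx, hy⟩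
  choose x hxU hxT using hseq
  have hxTto : Filter.Tendsto (fun n => norm (F (x n))) Filter.atTop (nhds T) := by
    refine tendsto_of_tendsto_of_tendsto_of_le_of_le (g := fun n : ℕ => T - 1 / (n + 1))
      (h := fun _ => T) ?_ tendsto_const_nhds
      (fun n => le_of_lt (hxT n)) (fun n => hle _ (hxU n))
    have : Filter.Tendsto (fun n : ℕ => 1 / ((n:ℝ) + 1)) Filter.atTop (nhds 0) :=
      tendsto_one_div_add_atTop_nhds_zero_nat
    simpa using tendsto_const_nhds.sub this
  obtain ⟨xb, hxbcl, φ, hφ, hφto⟩ :=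
    (hUb.isCompact_closure).tendsto_subseq (fun n => subset_closure (hxU n))
  have hsubT : Filter.Tendsto (fun n => norm (F (x (φ n)))) Filter.atTop (nhds T) :=
    hxTto.comp hφ.tendsto_atTop
  -- generic eventual smallness near frontier points
  have key : ∀ w ∈ frontier U,
      ∀ᶠ y in nhdsWithin w U, norm (F y) < (M + T) / 2 := by
    intro w hw
    have hbu : Filter.IsBoundedUnder (· ≤ ·) (nhdsWithin w U)
        (fun x => norm (F x)) := by
      exact ⟨B, Filter.eventually_map.2 (by
        filter_upwards [self_mem_nhdsWithin] with y hy using hFB y hy)⟩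
    refine Filter.eventually_lt_of_limsup_lt ?_ hbu
    calc Filter.limsup (fun x => norm (F x)) (nhdsWithin w U) ≤ M := hbd w hw
    _ < (M + T) / 2 := by linarith
  have hxbUF : xb ∈ U ∨ xb ∈ frontier U := by
    rcases em (xb ∈ U) with h | h
    · exact Or.inl h
    · exact Or.inr ⟨hxbcl, by simpa [hUo.interior_eq] using h⟩
  rcases hxbUF with hxbU | hxbf
  · -- interior maximum: |F xb| = T
    have hcont : ContinuousAt F xb :=
      (hFd.differentiableAt (hUo.mem_nhds hxbU)).continuousAt
    have hFxb : norm (F xb) = T := by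
      have : Filter.Tendsto (fun n => norm (F (x (φ n)))) Filter.atTop
          (nhds (norm (F xb))) :=
        ((continuous_norm.continuousAt).comp hcont).tendsto.comp hφto
      exact tendsto_nhds_unique this hsubT
    set V : Set ℂ := connectedComponentIn U xb with hV
    have hVo : IsOpen V := hUo.connectedComponentIn
    have hVU : V ⊆ U := connectedComponentIn_subset U xb
    have hxbV : xb ∈ V := mem_connectedComponentIn hxbU
    have hmax : IsMaxOn (norm ∘ F) V xb := by
      intro y hy
      simp only [Function.comp_apply, Set.mem_setOf_eq]
      rw [hFxb]; exact hle y (hVU hy)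
    have heq : Set.EqOn (norm ∘ F) (Function.const ℂ ‖F xb‖) V :=
      Complex.norm_eqOn_of_isPreconnected_of_isMaxOn isPreconnected_connectedComponentIn
        hVo (hFd.mono hVU) hxbV hmax
    have hVne : V.Nonempty := ⟨xb, hxbV⟩
    have hfVne : (frontier V).Nonempty := by
      rw [Set.nonempty_iff_ne_empty]
      intro hemp
      rcases frontier_eq_empty_iff.1 hemp with h | h
      · exact hVne.ne_empty h
      · obtain ⟨R, hR⟩ := (hUb.subset hVU).exists_norm_le
        have h1 : ((‖R‖ + 1 : ℝ) : ℂ) ∈ V := h ▸ Set.mem_univ _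
        have h2 := hR _ h1
        simp only [Complex.norm_real, Real.norm_eq_abs] at h2
        have h0 : (0:ℝ) ≤ |R| := abs_nonneg R
        rw [abs_of_pos (by positivity)] at h2
        linarith [le_abs_self R]
    obtain ⟨w, hwV⟩ := hfVne
    rw [hVo.frontier_eq] at hwV
    have hwcl : w ∈ closure V := hwV.1
    have hwnV : w ∉ V := hwV.2
    have hwnU : w ∉ U := by
      intro hwU
      obtain ⟨N, hNU, hNo, hwN, hNc⟩ :=
        locallyConnectedSpace_iff_subsets_isOpen_isConnected.1 (by infer_instance) w U
          (hUo.mem_nhds hwU)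
      obtain ⟨y0, hy0N, hy0V⟩ : (N ∩ V).Nonempty := by
        rcases mem_closure_iff.1 hwcl N hNo hwN with ⟨y, hy⟩
        exact ⟨y, hy⟩
      have hunion : IsPreconnected (N ∪ V) :=
        IsPreconnected.union y0 hy0N hy0V hNc.isPreconnected
          isPreconnected_connectedComponentIn
      have hsub : N ∪ V ⊆ V := by
        have := hunion.subset_connectedComponentIn (Set.mem_union_right N hxbV)
          (Set.union_subset hNU hVU)
        rwa [← hV] at this
      exact hwnV (hsub (Set.mem_union_left V hwN))
    have hwfU : w ∈ frontier U := by
      refine ⟨closure_mono hVU hwcl, ?_⟩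
      simpa [hUo.interior_eq] using hwnU
    have hevV : ∀ᶠ y in nhdsWithin w V,
        norm (F y) < (M + T) / 2 ∧ y ∈ V := by
      refine Filter.Eventually.and ?_ self_mem_nhdsWithin
      exact Filter.Eventually.filter_mono (nhdsWithin_mono w hVU) (key w hwfU)
    have hnbV : (nhdsWithin w V).NeBot := mem_closure_iff_nhdsWithin_neBot.1 hwcl
    obtain ⟨y, hy1, hy2⟩ := hevV.exists
    have : norm (F y) = T := by
      have h := heq hy2
      simpa [Function.comp, hFxb] using h
    rw [this] at hy1; linarith
  · -- accumulation on the frontier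
    have hto : Filter.Tendsto (fun n => x (φ n)) Filter.atTop (nhdsWithin xb U) := by
      refine tendsto_nhdsWithin_iff.2 ⟨hφto, Filter.Eventually.of_forall fun n => hxU (φ n)⟩
    have hev : ∀ᶠ n in Filter.atTop,
        norm (F (x (φ n))) < (M + T) / 2 := hto.eventually (key xb hxbf)
    have : T ≤ (M + T) / 2 :=
      le_of_tendsto hsubT (hev.mono fun n h => le_of_lt h)
    linarith

end Statement12Aux

namespace Statement12Aux

/-- argument of a rotated point given in polar form -/
lemma arg_rot_eq {μ θ r : ℝ} (hr : 0 < r) (h1 : -Real.pi < θ - μ) (h2 : θ - μ ≤ Real.pi) :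
    Complex.arg (Complex.exp ((↑(-μ) : ℂ) * Complex.I) * ((r : ℂ) * Complex.exp ((θ : ℂ) * Complex.I)))
      = θ - μ := by
  have key : Complex.exp ((↑(-μ) : ℂ) * Complex.I) * ((r : ℂ) * Complex.exp ((θ : ℂ) * Complex.I))
      = (r : ℂ) * Complex.exp ((↑(θ - μ) : ℂ) * Complex.I) := by
    have e1 : Complex.exp ((↑(-μ) : ℂ) * Complex.I) * ((r : ℂ) * Complex.exp ((θ : ℂ) * Complex.I))
        = (r : ℂ) * (Complex.exp ((↑(-μ) : ℂ) * Complex.I) * Complex.exp ((θ : ℂ) * Complex.I)) := by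
      ring
    rw [e1, ← Complex.exp_add]
    congr 1
    push_cast
    ring
  rw [key, Complex.exp_mul_I, Complex.arg_real_mul _ hr]
  exact Complex.arg_cos_add_sin_mul_I ⟨h1, h2⟩

/-- polar form of a rotated point -/
lemma rot_polar (μ : ℝ) (y : ℂ) (hy : y ≠ 0) :
    y = (norm y : ℂ) *
      Complex.exp ((↑(μ + Complex.arg (Complex.exp ((↑(-μ) : ℂ) * Complex.I) * y)) : ℂ)
        * Complex.I) := by
  set w := Complex.exp ((↑(-μ) : ℂ) * Complex.I) * y with hw
  have habs : norm w = norm y := by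
    rw [hw, norm_mul, Complex.norm_exp_ofReal_mul_I, one_mul]
  have h1 : (norm w : ℂ) * Complex.exp ((Complex.arg w : ℂ) * Complex.I) = w :=
    Complex.norm_mul_exp_arg_mul_I w
  have h2 : y = Complex.exp ((↑μ : ℂ) * Complex.I) * w := by
    rw [hw, ← mul_assoc, ← Complex.exp_add]
    have : (↑μ : ℂ) * Complex.I + (↑(-μ) : ℂ) * Complex.I = 0 := by push_cast; ring
    rw [this, Complex.exp_zero, one_mul]
  calc y = Complex.exp ((↑μ : ℂ) * Complex.I) * w := h2
  _ = Complex.exp ((↑μ : ℂ) * Complex.I) *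
      ((norm w : ℂ) * Complex.exp ((Complex.arg w : ℂ) * Complex.I)) := by rw [h1]
  _ = (norm w : ℂ) *
      Complex.exp ((↑μ : ℂ) * Complex.I + (Complex.arg w : ℂ) * Complex.I) := by
    rw [Complex.exp_add]; ring
  _ = (norm y : ℂ) *
      Complex.exp ((↑(μ + Complex.arg w) : ℂ) * Complex.I) := by
    rw [habs]; congr 2; push_cast; ring

/-- Closure of the truncated sector. -/
lemma closure_sector {μ r₀ c : ℝ} (hc : c ≤ Real.pi) {w : ℂ}
    (hw : w ∈ closure ({y : ℂ | r₀ < norm y} ∩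
      ((fun y => Complex.exp ((↑(-μ) : ℂ) * Complex.I) * y) ⁻¹'
        {v : ℂ | v ≠ 0 ∧ |Complex.arg v| < c}))) :
    r₀ ≤ norm w ∧ ∃ ψ : ℝ, |ψ| ≤ c ∧
      w = (norm w : ℂ) * Complex.exp ((↑(μ + ψ) : ℂ) * Complex.I) := by
  set rot := Complex.exp ((↑(-μ) : ℂ) * Complex.I) with hrot
  obtain ⟨y, hy, hyto⟩ := mem_closure_iff_seq_limit.1 hw
  have habs : ∀ n, norm (y n) = norm (rot * y n) := fun n => by
    rw [norm_mul, Complex.norm_exp_ofReal_mul_I, one_mul]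
  have h1 : r₀ ≤ norm w := by
    have : Filter.Tendsto (fun n => norm (y n)) Filter.atTop (nhds (norm w)) :=
      (continuous_norm.tendsto w).comp hyto
    exact le_of_tendsto_of_tendsto' tendsto_const_nhds this fun n => le_of_lt (hy n).1
  refine ⟨h1, ?_⟩
  set ψn : ℕ → ℝ := fun n => Complex.arg (rot * y n) with hψn
  have hψmem : ∀ n, ψn n ∈ Set.Icc (-c) c := fun n =>
    abs_le.1 (le_of_lt (hy n).2.2)
  obtain ⟨ψ, hψIcc, φ, hφ, hψto⟩ := (isCompact_Icc).tendsto_subseq hψmem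
  have hpolar : ∀ n, y n = (norm (y n) : ℂ) *
      Complex.exp ((↑(μ + ψn n) : ℂ) * Complex.I) := by
    intro n
    have hyne : y n ≠ 0 := by
      intro h0
      exact (hy n).2.1 (by simp [h0])
    exact rot_polar μ (y n) hyne
  have hcont : Filter.Tendsto
      (fun n => (norm (y (φ n)) : ℂ) *
        Complex.exp ((↑(μ + ψn (φ n)) : ℂ) * Complex.I))
      Filter.atTop (nhds ((norm w : ℂ) *
        Complex.exp ((↑(μ + ψ) : ℂ) * Complex.I))) := by
    apply Filter.Tendsto.mul
    · exact (Complex.continuous_ofReal.tendsto _).comp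
        ((continuous_norm.tendsto w).comp (hyto.comp hφ.tendsto_atTop))
    · refine (Complex.continuous_exp.tendsto _).comp ?_
      refine Filter.Tendsto.mul_const _ ?_
      exact (Complex.continuous_ofReal.tendsto _).comp (tendsto_const_nhds.add hψto)
  have hyφ : Filter.Tendsto (fun n => y (φ n)) Filter.atTop (nhds w) :=
    hyto.comp hφ.tendsto_atTop
  have : Filter.Tendsto (fun n => y (φ n)) Filter.atTop
      (nhds ((norm w : ℂ) * Complex.exp ((↑(μ + ψ) : ℂ) * Complex.I))) := by
    refine Filter.Tendsto.congr (fun n => ?_) hcont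
    exact (hpolar (φ n)).symm
  refine ⟨ψ, abs_le.2 hψIcc, tendsto_nhds_unique hyφ this⟩

end Statement12Aux

namespace Statement12Aux

lemma maxArc_bddAbove (W : Set ℂ) (r : ℝ) :
    BddAbove {L : ℝ | ∃ a b : ℝ, L = b - a ∧ a ≤ b ∧ b - a ≤ 2 * Real.pi ∧
      ∀ θ ∈ Set.Ioo a b, (r : ℂ) * Complex.exp (θ * Complex.I) ∈ W} := by
  refine ⟨2 * Real.pi, ?_⟩
  rintro L ⟨a, b, rfl, _, h2, _⟩
  exact h2

lemma maxArc_nonneg (W : Set ℂ) (r : ℝ) : 0 ≤ maxArc W r := by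
  have h0 : (0:ℝ) ∈ {L : ℝ | ∃ a b : ℝ, L = b - a ∧ a ≤ b ∧ b - a ≤ 2 * Real.pi ∧
      ∀ θ ∈ Set.Ioo a b, (r : ℂ) * Complex.exp (θ * Complex.I) ∈ W} := by
    refine ⟨0, 0, by ring, le_refl _, by simpa using (by positivity : (0:ℝ) ≤ 2 * Real.pi), ?_⟩
    intro θ hθ
    exact absurd hθ (by simp)
  exact le_csSup (maxArc_bddAbove W r) h0

lemma le_maxArc {W : Set ℂ} {r a b : ℝ} (hab : a ≤ b) (h2 : b - a ≤ 2 * Real.pi)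
    (h : ∀ θ ∈ Set.Ioo a b, (r : ℂ) * Complex.exp (θ * Complex.I) ∈ W) :
    b - a ≤ maxArc W r :=
  le_csSup (maxArc_bddAbove W r) ⟨a, b, rfl, hab, h2, h⟩

lemma re_G {γ : ℝ} {v : ℂ} (hv : v ≠ 0) :
    (Complex.exp ((γ : ℂ) * Complex.log v)).re
      = (norm v) ^ γ * Real.cos (γ * Complex.arg v) := by
  rw [Complex.exp_re]
  have h1 : ((γ : ℂ) * Complex.log v).re = γ * Real.log (norm v) := by
    rw [Complex.mul_re]
    simp [Complex.log_re, Complex.log_im]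
  have h2 : ((γ : ℂ) * Complex.log v).im = γ * Complex.arg v := by
    rw [Complex.mul_im]
    simp [Complex.log_re, Complex.log_im]
  rw [h1, h2, Real.rpow_def_of_pos (norm_pos_iff.mpr hv), mul_comm (Real.log _) γ]

lemma re_H {γ r₀ : ℝ} (hr₀ : 0 < r₀) {v : ℂ} (hv : v ≠ 0) :
    (Complex.exp ((γ : ℂ) * ((Real.log r₀ : ℂ) - Complex.log v))).re
      = (r₀ / norm v) ^ γ * Real.cos (γ * Complex.arg v) := by
  rw [Complex.exp_re]
  have habs : (0:ℝ) < norm v := norm_pos_iff.mpr hv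
  have h1 : ((γ : ℂ) * ((Real.log r₀ : ℂ) - Complex.log v)).re
      = γ * Real.log (r₀ / norm v) := by
    rw [Complex.mul_re]
    simp only [Complex.sub_re, Complex.ofReal_re, Complex.log_re, Complex.sub_im,
      Complex.ofReal_im, Complex.log_im, Complex.mul_im, Complex.ofReal_im]
    rw [Real.log_div (ne_of_gt hr₀) (ne_of_gt habs)]
    simp
  have h2 : ((γ : ℂ) * ((Real.log r₀ : ℂ) - Complex.log v)).im
      = γ * (-Complex.arg v) := by
    rw [Complex.mul_im]
    simp [Complex.log_im]
  rw [h1, h2, Real.rpow_def_of_pos (by positivity), mul_comm (Real.log _) γ]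
  rw [mul_neg, Real.cos_neg]

end Statement12Aux

namespace Statement12Aux

lemma exp_per (θ : ℝ) :
    Complex.exp ((↑(θ + 2*Real.pi) : ℂ) * Complex.I) = Complex.exp ((θ:ℂ) * Complex.I) := by
  push_cast
  rw [add_mul, Complex.exp_add, Complex.exp_two_pi_mul_I, mul_one]

lemma arc_construction {W : Set ℂ} (hWo : IsOpen W)
    (hstar : ∀ z ∈ W, segment ℝ 0 z ⊆ W)
    {r₀ : ℝ} (hr₀ : 0 < r₀) {m₀ : ℝ}
    (hm₀ : (r₀:ℂ) * Complex.exp ((m₀:ℂ) * Complex.I) ∉ W)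
    (hm₀Ioc : m₀ ∈ Set.Ioc (-Real.pi) Real.pi)
    {x : ℂ} (hx : x ∈ W) (hxr : r₀ < norm x) :
    ∃ a b : ℝ, a < Complex.arg x ∧ Complex.arg x < b ∧ b - a ≤ 2*Real.pi ∧
      ((r₀:ℂ) * Complex.exp ((a:ℂ) * Complex.I) ∉ W) ∧
      ((r₀:ℂ) * Complex.exp ((b:ℂ) * Complex.I) ∉ W) ∧
      (∀ θ ∈ Set.Ioo a b, (r₀:ℂ) * Complex.exp ((θ:ℂ) * Complex.I) ∈ W) := by
  set θt := Complex.arg x with hθt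
  have hx0 : x ≠ 0 := by
    intro h
    rw [h] at hxr
    simp only [norm_zero] at hxr
    linarith
  have habs0 : 0 < norm x := norm_pos_iff.mpr hx0
  set Θ : Set ℝ := {θ : ℝ | (r₀:ℂ) * Complex.exp ((θ:ℂ) * Complex.I) ∈ W} with hΘ
  have hΘo : IsOpen Θ := by
    have hcont : Continuous fun θ : ℝ => (r₀:ℂ) * Complex.exp ((θ:ℂ) * Complex.I) :=
      continuous_const.mul (Complex.continuous_exp.comp
        (Complex.continuous_ofReal.mul continuous_const))
    exact hWo.preimage hcont
  have hθtΘ : θt ∈ Θ := by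
    have hx1 : x = (norm x : ℂ) * Complex.exp ((θt:ℂ) * Complex.I) := by
      rw [hθt]
      exact (Complex.norm_mul_exp_arg_mul_I x).symm
    have h1 : (r₀ / norm x) • x = (r₀:ℂ) * Complex.exp ((θt:ℂ) * Complex.I) := by
      calc (r₀ / norm x) • x
          = ((r₀ / norm x : ℝ) : ℂ) * ((norm x : ℂ) *
            Complex.exp ((θt:ℂ) * Complex.I)) := by rw [Complex.real_smul, ← hx1]
      _ = (r₀:ℂ) * Complex.exp ((θt:ℂ) * Complex.I) := by
          rw [← mul_assoc]
          congr 1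
          push_cast
          exact div_mul_cancel₀ _ (by exact_mod_cast ne_of_gt habs0)
    have h2 := hstar x hx (smul_mem_segment (t := r₀ / norm x) (x := x)
      (by positivity) (by rw [div_le_one habs0]; exact hxr.le))
    rw [h1] at h2
    exact h2
  have hθtIoc : θt ∈ Set.Ioc (-Real.pi) Real.pi := Complex.arg_mem_Ioc x
  have hm₀Θ : m₀ ∉ Θ := hm₀
  have hmp : m₀ + 2*Real.pi ∉ Θ := by
    intro h
    apply hm₀
    have h2 := exp_per m₀
    show (r₀:ℂ) * Complex.exp ((m₀:ℂ) * Complex.I) ∈ W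
    rw [← h2]
    exact h
  have hmm : m₀ - 2*Real.pi ∉ Θ := by
    intro h
    apply hm₀
    have h2 := exp_per (m₀ - 2*Real.pi)
    rw [sub_add_cancel] at h2
    show (r₀:ℂ) * Complex.exp ((m₀:ℂ) * Complex.I) ∈ W
    rw [h2]
    exact h
  -- choose the base point m
  obtain ⟨m, hmΘ, hm2Θ, hmlt, hmle⟩ :
      ∃ m : ℝ, m ∉ Θ ∧ m + 2*Real.pi ∉ Θ ∧ m < θt ∧ θt ≤ m + 2*Real.pi := by
    rcases lt_or_ge m₀ θt with hc | hc
    · refine ⟨m₀, hm₀Θ, hmp, hc, ?_⟩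
      have := hθtIoc.2
      have := hm₀Ioc.1
      have hπ := Real.pi_pos
      linarith
    · refine ⟨m₀ - 2*Real.pi, hmm, by simpa [sub_add_cancel] using hm₀Θ, ?_, by linarith⟩
      have := hθtIoc.1
      have := hm₀Ioc.2
      have hπ := Real.pi_pos
      linarith
  set Sa : Set ℝ := Θᶜ ∩ Set.Icc m θt with hSa
  set Sb : Set ℝ := Θᶜ ∩ Set.Icc θt (m + 2*Real.pi) with hSb
  have hSane : Sa.Nonempty := ⟨m, hmΘ, le_refl m, hmlt.le⟩
  have hSbne : Sb.Nonempty := ⟨m + 2*Real.pi, hm2Θ, hmle, le_refl _⟩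
  have hSac : IsClosed Sa := (isClosed_compl_iff.2 hΘo).inter isClosed_Icc
  have hSbc : IsClosed Sb := (isClosed_compl_iff.2 hΘo).inter isClosed_Icc
  have hSabd : BddAbove Sa := BddAbove.mono Set.inter_subset_right bddAbove_Icc
  have hSbbd : BddBelow Sb := BddBelow.mono Set.inter_subset_right bddBelow_Icc
  set a := sSup Sa with ha
  set b := sInf Sb with hb
  have hamem : a ∈ Sa := hSac.csSup_mem hSane hSabd
  have hbmem : b ∈ Sb := hSbc.csInf_mem hSbne hSbbd
  have haθ : a < θt := lt_of_le_of_ne hamem.2.2 (fun h => hamem.1 (h ▸ hθtΘ))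
  have hbθ : θt < b := lt_of_le_of_ne hbmem.2.1 (fun h => hbmem.1 (h ▸ hθtΘ))
  have hIoo : ∀ θ ∈ Set.Ioo a b, θ ∈ Θ := by
    rintro θ ⟨hθa, hθb⟩
    by_contra hθn
    rcases le_total θ θt with hle | hge
    · have hmem : θ ∈ Sa := ⟨hθn, le_trans hamem.2.1 hθa.le, hle⟩
      exact absurd (le_csSup hSabd hmem) (not_le.2 hθa)
    · have hmem : θ ∈ Sb := ⟨hθn, hge, le_trans hθb.le hbmem.2.2⟩
      exact absurd (csInf_le hSbbd hmem) (not_le.2 hθb)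
  refine ⟨a, b, haθ, hbθ, ?_, hamem.1, hbmem.1, hIoo⟩
  have h1 : m ≤ a := hamem.2.1
  have h2 : b ≤ m + 2*Real.pi := hbmem.2.2
  linarith

end Statement12Aux

set_option maxHeartbeats 4000000 in
open Statement12Aux in
theorem statement12 (W : Set ℂ) (hWo : IsOpen W) (hWc : IsConnected W)
    (hWne : W ≠ Set.univ) (hstar : ∀ z ∈ W, segment ℝ 0 z ⊆ W)
    (A : ℝ) (hA : Filter.Tendsto (fun r => maxArc W r) Filter.atTop (nhds A))
    (f : ℂ → ℂ) (hf : DifferentiableOn ℂ f W)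
    (K : ℝ) (hK : ∀ w ∈ frontier W,
      Filter.limsup (fun z => ‖f z‖) (nhdsWithin w W) ≤ K)
    (p : ℝ) (hp0 : 0 < p) (hp : p < Real.pi / (2 * A)) (C : ℝ) (hC : 0 < C)
    (hgrow : ∀ z ∈ W, ‖f z‖ ≤ C * Real.exp (C * ‖z‖ ^ (2 * p)) + C) :
    ∀ z ∈ W, ‖f z‖ ≤ K := by
  have hπ := Real.pi_pos
  -- basic structure of W
  obtain ⟨zW, hzW⟩ := hWc.nonempty
  have h0W : (0:ℂ) ∈ W := by
    have := hstar zW hzW (smul_mem_segment (t := 0) (x := zW) le_rfl zero_le_one)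
    simpa using this
  obtain ⟨ζ, hζ⟩ : ∃ ζ : ℂ, ζ ∉ W := by
    by_contra h
    push_neg at h
    exact hWne (Set.eq_univ_of_forall h)
  have hζ0 : ζ ≠ 0 := fun h => hζ (h ▸ h0W)
  have hζabs : 0 < norm ζ := norm_pos_iff.mpr hζ0
  -- the growth majorant
  set Mb : ℝ → ℝ := fun r => C * Real.exp (C * r ^ (2*p)) + C with hMbdef
  have hMbpos : ∀ r, 0 < Mb r := fun r => by positivity
  have hMbmono : ∀ {r s : ℝ}, 0 ≤ r → r ≤ s → Mb r ≤ Mb s := by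
    intro r s hr hrs
    have h1 : r ^ (2*p) ≤ s ^ (2*p) := Real.rpow_le_rpow hr hrs (by positivity)
    have h2 : Real.exp (C * r ^ (2*p)) ≤ Real.exp (C * s ^ (2*p)) :=
      Real.exp_le_exp.2 (by nlinarith)
    simp only [hMbdef]
    nlinarith
  have hfMb : ∀ x ∈ W, norm (f x) ≤ Mb (norm x) := hgrow
  -- eventual bound near any point
  have hbound_near : ∀ w : ℂ, ∀ᶠ y in nhdsWithin w W,
      norm (f y) ≤ Mb (norm w + 1) := by
    intro w
    filter_upwards [mem_nhdsWithin_of_mem_nhds (Metric.ball_mem_nhds w one_pos),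
      self_mem_nhdsWithin] with y hy1 hy2
    have hdist : norm (y - w) < 1 := by
      have := Metric.mem_ball.1 hy1
      rwa [Complex.dist_eq] at this
    have hyabs : norm y ≤ norm w + 1 := by
      calc norm y = norm (w + (y - w)) := by ring_nf
      _ ≤ norm w + norm (y - w) := norm_add_le _ _
      _ ≤ norm w + 1 := by linarith
    exact le_trans (hfMb y hy2) (hMbmono (norm_nonneg y) hyabs)
  -- limsup transfer at frontier points
  have hlimW : ∀ w ∈ frontier W, ∀ U : Set ℂ, U ⊆ W → (nhdsWithin w U).NeBot →
      Filter.limsup (fun y => norm (f y)) (nhdsWithin w U) ≤ K := by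
    intro w hw U hUW hnb
    refine le_trans (Filter.limsup_le_limsup_of_le (nhdsWithin_mono w hUW) ?_ ?_) (hK w hw)
    · exact Filter.isCoboundedUnder_le_of_le _ (fun y => norm_nonneg (f y))
    · exact ⟨Mb (norm w + 1), Filter.eventually_map.2 (hbound_near w)⟩
  -- K is nonnegative
  have hfrne : (frontier W).Nonempty := by
    rw [Set.nonempty_iff_ne_empty]
    intro h
    rcases frontier_eq_empty_iff.1 h with h | h
    · rw [h] at h0W
      exact absurd h0W (Set.notMem_empty 0)
    · exact hWne h
  have hK0 : 0 ≤ K := by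
    obtain ⟨w, hw⟩ := hfrne
    have hnb : (nhdsWithin w W).NeBot :=
      mem_closure_iff_nhdsWithin_neBot.1 (frontier_subset_closure hw)
    refine le_trans ?_ (hK w hw)
    refine Filter.le_limsup_of_frequently_le
      (Filter.Frequently.of_forall fun y => norm_nonneg (f y))
      ⟨Mb (norm w + 1), Filter.eventually_map.2 (hbound_near w)⟩
  -- A is nonnegative and below π/(2p)
  have hA0 : 0 ≤ A := ge_of_tendsto' hA fun r => maxArc_nonneg W r
  have hAp : A < Real.pi / (2*p) := by
    rcases eq_or_lt_of_le hA0 with h | h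
    · rw [← h]; positivity
    · rw [lt_div_iff₀ (by positivity : (0:ℝ) < 2*A)] at hp
      rw [lt_div_iff₀ (by positivity : (0:ℝ) < 2*p)]
      nlinarith
  -- the exponents
  set β : ℝ := (A + Real.pi/(2*p))/2 with hβdef
  have hβA : A < β := by rw [hβdef]; linarith
  have hβp : β < Real.pi/(2*p) := by rw [hβdef]; linarith
  have hβ0 : 0 < β := lt_of_le_of_lt hA0 hβA
  set γ : ℝ := (2*p + Real.pi/β)/2 with hγdef
  have hpβ : 2*p < Real.pi/β := by
    rw [lt_div_iff₀ hβ0]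
    rw [lt_div_iff₀ (by positivity : (0:ℝ) < 2*p)] at hβp
    nlinarith
  have hγ1 : 2*p < γ := by rw [hγdef]; linarith
  have hγ2 : γ < Real.pi/β := by rw [hγdef]; linarith
  have hγ0 : 0 < γ := by positivity
  have hγβ : γ * β < Real.pi := by
    rw [lt_div_iff₀ hβ0] at hγ2
    exact hγ2
  set βM : ℝ := min β (2*Real.pi) with hβMdef
  have hβM0 : 0 < βM := lt_min hβ0 (by positivity)
  have hβMβ : βM ≤ β := min_le_left _ _
  have hγβM : γ * βM < Real.pi :=
    lt_of_le_of_lt (mul_le_mul_of_nonneg_left hβMβ hγ0.le) hγβ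
  set cst : ℝ := Real.cos (γ * βM / 2) with hcstdef
  have hcst : 0 < cst := by
    apply Real.cos_pos_of_mem_Ioo
    constructor
    · have : (0:ℝ) < γ * βM / 2 := by positivity
      linarith
    · linarith
  have hcst1 : cst ≤ 1 := Real.cos_le_one _
  -- choice of r₀
  obtain ⟨R₀, hR₀⟩ := Filter.eventually_atTop.1 (hA.eventually_lt_const hβA)
  set r₀ : ℝ := max R₀ (max (norm ζ) 1) with hr₀def
  have hr₀1 : 1 ≤ r₀ := le_trans (le_max_right _ _) (le_max_right _ _)
  have hr₀0 : 0 < r₀ := lt_of_lt_of_le one_pos hr₀1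
  have hr₀ζ : norm ζ ≤ r₀ := le_trans (le_max_left _ _) (le_max_right _ _)
  have hr₀β : maxArc W r₀ < β := hR₀ r₀ (le_max_left _ _)
  -- a point outside W on the circle of radius r₀, in polar form
  have hm₀ : (r₀:ℂ) * Complex.exp ((Complex.arg ζ : ℂ) * Complex.I) ∉ W := by
    intro hmem
    apply hζ
    have hne : (r₀:ℂ) * Complex.exp ((Complex.arg ζ : ℂ) * Complex.I) ≠ 0 := by
      apply mul_ne_zero
      · exact_mod_cast ne_of_gt hr₀0
      · exact Complex.exp_ne_zero _
    have heq : (norm ζ / r₀) • ((r₀:ℂ) * Complex.exp ((Complex.arg ζ : ℂ) * Complex.I))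
        = ζ := by
      rw [Complex.real_smul, ← mul_assoc]
      have h1 : ((norm ζ / r₀ : ℝ) : ℂ) * (r₀:ℂ) = (norm ζ : ℂ) := by
        push_cast
        exact div_mul_cancel₀ _ (by exact_mod_cast ne_of_gt hr₀0)
      rw [h1]
      exact Complex.norm_mul_exp_arg_mul_I ζ
    have := hstar _ hmem (smul_mem_segment (t := norm ζ / r₀)
      (x := (r₀:ℂ) * Complex.exp ((Complex.arg ζ : ℂ) * Complex.I))
      (by positivity) (by rw [div_le_one hr₀0]; exact hr₀ζ))
    rwa [heq] at this
  -- rays through non-members of Θ stay outside W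
  have hray : ∀ θ : ℝ, (r₀:ℂ) * Complex.exp ((θ:ℂ) * Complex.I) ∉ W →
      ∀ r : ℝ, r₀ ≤ r → (r:ℂ) * Complex.exp ((θ:ℂ) * Complex.I) ∉ W := by
    intro θ hθ r hr hmem
    apply hθ
    have hrpos : 0 < r := lt_of_lt_of_le hr₀0 hr
    have heq : (r₀/r) • ((r:ℂ) * Complex.exp ((θ:ℂ) * Complex.I))
        = (r₀:ℂ) * Complex.exp ((θ:ℂ) * Complex.I) := by
      rw [Complex.real_smul, ← mul_assoc]
      congr 1
      push_cast
      exact div_mul_cancel₀ _ (by exact_mod_cast ne_of_gt hrpos)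
    have := hstar _ hmem (smul_mem_segment (t := r₀/r)
      (x := (r:ℂ) * Complex.exp ((θ:ℂ) * Complex.I))
      (by positivity) (by rw [div_le_one hrpos]; exact hr))
    rwa [heq] at this
  -- main loop over the margin ε'
  intro z hz
  refine le_of_forall_pos_le_add ?_
  intro ε' hε'
  set Kt : ℝ := K + ε' with hKtdef
  have hKt0 : 0 < Kt := by rw [hKtdef]; linarith
  have hKKt : K ≤ Kt := by rw [hKtdef]; linarith
  set lam : ℝ := max 0 (Real.log (2 * Mb r₀ / Kt) / cst) with hlamdef
  have hlam0 : 0 ≤ lam := le_max_left _ _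
  have hlamKey : Mb r₀ * Real.exp (-(lam * cst)) ≤ Kt/2 := by
    have h1 : Real.log (2 * Mb r₀ / Kt) / cst ≤ lam := le_max_right _ _
    have h2 : Real.log (2 * Mb r₀ / Kt) ≤ lam * cst := by
      rw [div_le_iff₀ hcst] at h1
      exact h1
    have h3 : Real.exp (-(lam * cst)) ≤ Real.exp (-(Real.log (2 * Mb r₀ / Kt))) :=
      Real.exp_le_exp.2 (by linarith)
    have h4 : Real.exp (-(Real.log (2 * Mb r₀ / Kt))) = Kt / (2 * Mb r₀) := by
      rw [Real.exp_neg, Real.exp_log (by positivity)]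
      rw [inv_div]
    calc Mb r₀ * Real.exp (-(lam * cst)) ≤ Mb r₀ * (Kt / (2 * Mb r₀)) := by
          rw [← h4]
          exact mul_le_mul_of_nonneg_left h3 (hMbpos r₀).le
    _ = Kt/2 := by field_simp [(hMbpos r₀).ne']
  -- ARM BOUND
  have harm : ∀ x ∈ W, r₀ < norm x →
      norm (f x) ≤ Kt * Real.exp (lam * (r₀ / norm x) ^ γ) := by
    intro x hxW hxr
    have hx0 : x ≠ 0 := by
      intro h
      rw [h] at hxr
      simp only [norm_zero] at hxr
      linarith only [hxr, hr₀0]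
    have hxabs : 0 < norm x := norm_pos_iff.mpr hx0
    obtain ⟨a, b, haθ, hbθ, hba2π, haW, hbW, hIooW⟩ :=
      arc_construction hWo hstar hr₀0 hm₀ (Complex.arg_mem_Ioc ζ) hxW hxr
    have hab : a < b := lt_trans haθ hbθ
    have hell0 : (0:ℝ) < b - a := by linarith only [haθ, hbθ]
    have hellM : b - a ≤ maxArc W r₀ := le_maxArc hab.le hba2π hIooW
    have hellβ : b - a < β := lt_of_le_of_lt hellM hr₀β
    have hellβM : b - a ≤ βM := le_min hellβ.le hba2π
    have hellπ : (b - a)/2 ≤ Real.pi := by linarith only [hba2π, hπ]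
    set μ : ℝ := (a+b)/2 with hμdef
    have hμa : μ - (b-a)/2 = a := by rw [hμdef]; ring
    have hμb : μ + (b-a)/2 = b := by rw [hμdef]; ring
    set rot : ℂ := Complex.exp ((↑(-μ) : ℂ) * Complex.I) with hrotdef
    have hrotabs : norm rot = 1 := by
      rw [hrotdef]; exact Complex.norm_exp_ofReal_mul_I _
    set S : Set ℂ := {y : ℂ | r₀ < norm y} ∩
      ((fun y => Complex.exp ((↑(-μ) : ℂ) * Complex.I) * y) ⁻¹'
        {v : ℂ | v ≠ 0 ∧ |Complex.arg v| < (b-a)/2}) with hSdef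
    have hSo : IsOpen S := by
      apply IsOpen.inter
      · exact isOpen_lt continuous_const continuous_norm
      · exact (isOpen_argSector hellπ).preimage (continuous_const.mul continuous_id)
    have habs_rot : ∀ y : ℂ, norm (Complex.exp ((↑(-μ) : ℂ) * Complex.I) * y)
        = norm y := fun y => by
      rw [norm_mul, Complex.norm_exp_ofReal_mul_I, one_mul]
    -- membership from polar data
    have hmemS : ∀ (r θ : ℝ), r₀ < r → a < θ → θ < b →
        (r:ℂ) * Complex.exp ((θ:ℂ) * Complex.I) ∈ S := by
      intro r θ h1 h2 h3
      have hr0 : 0 < r := lt_trans hr₀0 h1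
      have habsy : norm ((r:ℂ) * Complex.exp ((θ:ℂ) * Complex.I)) = r := by
        rw [norm_mul, Complex.norm_exp_ofReal_mul_I, mul_one, Complex.norm_real, Real.norm_eq_abs,
          abs_of_pos hr0]
      have hθμ1 : -Real.pi < θ - μ := by
        have h4 : -((b-a)/2) < θ - μ := by linarith only [h2, hμa]
        linarith only [h4, hellπ]
      have hθμ2 : θ - μ ≤ Real.pi := by
        have h4 : θ - μ < (b-a)/2 := by linarith only [h3, hμb]
        linarith only [h4, hellπ]
      have harg : Complex.arg (Complex.exp ((↑(-μ) : ℂ) * Complex.I) *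
          ((r:ℂ) * Complex.exp ((θ:ℂ) * Complex.I))) = θ - μ :=
        arg_rot_eq hr0 hθμ1 hθμ2
      refine ⟨?_, ?_, ?_⟩
      · show r₀ < norm ((r:ℂ) * Complex.exp ((θ:ℂ) * Complex.I))
        rw [habsy]
        exact h1
      · apply mul_ne_zero (Complex.exp_ne_zero _)
        apply mul_ne_zero _ (Complex.exp_ne_zero _)
        exact_mod_cast ne_of_gt hr0
      · show |Complex.arg _| < (b-a)/2
        rw [harg, abs_lt]
        constructor
        · linarith only [h2, hμa]
        · linarith only [h3, hμb]
    have hxS : x ∈ S := by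
      have hx1 : x = (↑(norm x) : ℂ) *
          Complex.exp ((↑(Complex.arg x) : ℂ) * Complex.I) :=
        (Complex.norm_mul_exp_arg_mul_I x).symm
      rw [hx1]
      exact hmemS _ _ hxr haθ hbθ
    -- basic facts on S
    have hSne : ∀ y ∈ S, (Complex.exp ((↑(-μ) : ℂ) * Complex.I) * y) ≠ 0 :=
      fun y hy => hy.2.1
    have hSslit : ∀ y ∈ S, Complex.exp ((↑(-μ) : ℂ) * Complex.I) * y ∈ Complex.slitPlane := by
      intro y hy
      rw [Complex.mem_slitPlane_iff_arg]
      refine ⟨?_, hy.2.1⟩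
      intro h
      have h2 : |Complex.arg (Complex.exp ((↑(-μ) : ℂ) * Complex.I) * y)| < (b-a)/2 := hy.2.2
      rw [h, abs_of_pos hπ] at h2
      linarith only [h2, hellπ]
    have hScos : ∀ y ∈ S,
        cst ≤ Real.cos (γ * Complex.arg (Complex.exp ((↑(-μ) : ℂ) * Complex.I) * y)) := by
      intro y hy
      have hyarg : |Complex.arg (Complex.exp ((↑(-μ) : ℂ) * Complex.I) * y)| < (b-a)/2 :=
        hy.2.2
      have h1 : |γ * Complex.arg (Complex.exp ((↑(-μ) : ℂ) * Complex.I) * y)| ≤ γ * βM / 2 := by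
        rw [abs_mul, abs_of_pos hγ0]
        have h2 : |Complex.arg (Complex.exp ((↑(-μ) : ℂ) * Complex.I) * y)| ≤ βM/2 := by
          linarith only [hyarg, hellβM]
        have h3 := mul_le_mul_of_nonneg_left h2 hγ0.le
        linarith only [h3]
      calc cst = Real.cos (γ * βM / 2) := rfl
      _ ≤ Real.cos |γ * Complex.arg (Complex.exp ((↑(-μ) : ℂ) * Complex.I) * y)| :=
          Real.cos_le_cos_of_nonneg_of_le_pi (abs_nonneg _) (by linarith only [hγβM, hπ]) h1
      _ = Real.cos (γ * Complex.arg (Complex.exp ((↑(-μ) : ℂ) * Complex.I) * y)) :=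
          Real.cos_abs _
    -- the multiplier pieces
    set Lg : ℂ → ℂ := fun y => Complex.log (Complex.exp ((↑(-μ) : ℂ) * Complex.I) * y)
      with hLgdef
    set Gg : ℂ → ℂ := fun y => Complex.exp ((γ:ℂ) * Lg y) with hGdef
    set Hh : ℂ → ℂ := fun y => Complex.exp ((γ:ℂ) * ((Real.log r₀ : ℂ) - Lg y)) with hHdef
    have hGre : ∀ y ∈ S, (Gg y).re = (norm y) ^ γ *
        Real.cos (γ * Complex.arg (Complex.exp ((↑(-μ) : ℂ) * Complex.I) * y)) := by
      intro y hy
      have h := re_G (γ := γ) (hSne y hy)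
      rw [habs_rot y] at h
      exact h
    have hHre : ∀ y ∈ S, (Hh y).re = (r₀ / norm y) ^ γ *
        Real.cos (γ * Complex.arg (Complex.exp ((↑(-μ) : ℂ) * Complex.I) * y)) := by
      intro y hy
      have h := re_H (γ := γ) hr₀0 (hSne y hy)
      rw [habs_rot y] at h
      exact h
    have hS0 : ∀ y ∈ S, 0 < norm y := fun y hy => lt_trans hr₀0 hy.1
    have hGre_lb : ∀ y ∈ S, cst * (norm y) ^ γ ≤ (Gg y).re := by
      intro y hy
      rw [hGre y hy]
      have h1 := hScos y hy
      have h2 : (0:ℝ) ≤ (norm y) ^ γ := Real.rpow_nonneg (hS0 y hy).le γ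
      have h3 := mul_le_mul_of_nonneg_left h1 h2
      linarith only [h3]
    have hGre0 : ∀ y ∈ S, 0 ≤ (Gg y).re := by
      intro y hy
      refine le_trans ?_ (hGre_lb y hy)
      exact mul_nonneg hcst.le (Real.rpow_nonneg (norm_nonneg y) γ)
    have hHre_lb : ∀ y ∈ S, cst * (r₀ / norm y) ^ γ ≤ (Hh y).re := by
      intro y hy
      rw [hHre y hy]
      have h1 := hScos y hy
      have h2 : (0:ℝ) ≤ (r₀ / norm y) ^ γ :=
        Real.rpow_nonneg (div_nonneg hr₀0.le (norm_nonneg y)) γ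
      have h3 := mul_le_mul_of_nonneg_left h1 h2
      linarith only [h3]
    have hHre0 : ∀ y ∈ S, 0 ≤ (Hh y).re := by
      intro y hy
      refine le_trans ?_ (hHre_lb y hy)
      exact mul_nonneg hcst.le
        (Real.rpow_nonneg (div_nonneg hr₀0.le (norm_nonneg y)) γ)
    have hHre_ub : ∀ y ∈ S, (Hh y).re ≤ (r₀ / norm y) ^ γ := by
      intro y hy
      rw [hHre y hy]
      have h1 : Real.cos (γ * Complex.arg (Complex.exp ((↑(-μ) : ℂ) * Complex.I) * y)) ≤ 1 :=
        Real.cos_le_one _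
      have h2 : (0:ℝ) ≤ (r₀ / norm y) ^ γ :=
        Real.rpow_nonneg (div_nonneg hr₀0.le (norm_nonneg y)) γ
      exact mul_le_of_le_one_right h2 h1
    -- differentiability on S
    have hLgd : ∀ y ∈ S, DifferentiableAt ℂ Lg y := by
      intro y hy
      have h1 : DifferentiableAt ℂ (fun v : ℂ => Complex.exp ((↑(-μ) : ℂ) * Complex.I) * v) y :=
        differentiableAt_id.const_mul _
      exact (Complex.differentiableAt_log (hSslit y hy)).comp y h1
    -- the ε-regularized estimate
    have hεstep : ∀ ε : ℝ, 0 < ε →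
        norm (f x) * Real.exp (-(lam * (Hh x).re) - ε * (Gg x).re) ≤ Kt := by
      intro ε hε
      set Fe : ℂ → ℂ := fun y => f y *
        Complex.exp (-(lam:ℂ) * Hh y - (ε:ℂ) * Gg y) with hFedef
      have hre_exp : ∀ y : ℂ, (-(lam:ℂ) * Hh y - (ε:ℂ) * Gg y).re
          = -(lam * (Hh y).re) - ε * (Gg y).re := by
        intro y
        simp [Complex.sub_re, Complex.mul_re, Complex.ofReal_re, Complex.ofReal_im,
          Complex.neg_re, Complex.neg_im]
      have hFeabs : ∀ y : ℂ, norm (Fe y)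
          = norm (f y) * Real.exp (-(lam * (Hh y).re) - ε * (Gg y).re) := by
        intro y
        rw [hFedef]
        simp only []
        rw [norm_mul, Complex.norm_exp, hre_exp y]
      -- decay at infinity
      have hdecay : Filter.Tendsto (fun r : ℝ => Mb r * Real.exp (-(ε*cst) * r ^ γ))
          Filter.atTop (nhds 0) := by
        have hbase : Filter.Tendsto (fun r : ℝ => C * r ^ (2*p) - (ε*cst) * r ^ γ)
            Filter.atTop Filter.atBot := by
          have h1 : Filter.Tendsto (fun r : ℝ => C * r ^ (2*p-γ) - ε*cst)
              Filter.atTop (nhds (C * 0 - ε*cst)) := by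
            refine Filter.Tendsto.sub_const ?_ _
            refine Filter.Tendsto.const_mul _ ?_
            have h2 := tendsto_rpow_neg_atTop (by linarith only [hγ1] : (0:ℝ) < γ - 2*p)
            have h3 : (fun x : ℝ => x ^ (-(γ - 2*p))) = fun x : ℝ => x ^ (2*p - γ) := by
              funext x; congr 1; ring
            rwa [h3] at h2
          have h4 : Filter.Tendsto (fun r : ℝ => r ^ γ * (C * r ^ (2*p-γ) - ε*cst))
              Filter.atTop Filter.atBot := by
            refine Filter.Tendsto.atTop_mul_neg ?_ (tendsto_rpow_atTop hγ0) h1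
            have h5 : (0:ℝ) < ε*cst := mul_pos hε hcst
            linarith only [h5]
          refine h4.congr' ?_
          filter_upwards [Filter.eventually_gt_atTop (0:ℝ)] with r hr
          rw [mul_sub, show r ^ γ * (C * r ^ (2*p-γ)) = C * (r ^ γ * r ^ (2*p-γ)) from by ring,
            ← Real.rpow_add hr, show γ + (2*p-γ) = 2*p from by ring]
          ring
        have hMbe : ∀ r : ℝ, Mb r * Real.exp (-(ε*cst) * r ^ γ)
            = C * Real.exp (C * r ^ (2*p) - (ε*cst) * r ^ γ)
              + C * Real.exp (-(ε*cst) * r ^ γ) := by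
          intro r
          simp only [hMbdef]
          rw [add_mul, mul_assoc, ← Real.exp_add]
          ring_nf
        have hneg : -(ε*cst) < 0 := by
          have h5 : (0:ℝ) < ε*cst := mul_pos hε hcst
          linarith only [h5]
        have h5 : Filter.Tendsto (fun r : ℝ => -(ε*cst) * r ^ γ) Filter.atTop Filter.atBot :=
          Filter.Tendsto.neg_mul_atTop (C := -(ε*cst)) hneg tendsto_const_nhds
            (tendsto_rpow_atTop hγ0)
        have h6 : Filter.Tendsto
            (fun r : ℝ => C * Real.exp (C * r ^ (2*p) - (ε*cst) * r ^ γ)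
              + C * Real.exp (-(ε*cst) * r ^ γ)) Filter.atTop (nhds (C * 0 + C * 0)) := by
          refine Filter.Tendsto.add ?_ ?_
          · exact (tendsto_const_nhds.mul (Real.tendsto_exp_atBot.comp hbase))
          · exact (tendsto_const_nhds.mul (Real.tendsto_exp_atBot.comp h5))
        have h7 := h6.congr (fun r => (hMbe r).symm)
        simpa using h7
      obtain ⟨Rε, hRε⟩ := Filter.eventually_atTop.1
        (hdecay.eventually_lt_const (show (0:ℝ) < Kt/2 by linarith only [hKt0, hKtdef, hε', hK0]))
      set R : ℝ := max (Rε + 1) (max (r₀+2) (norm x + 1)) with hRdef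
      have hRε1 : Rε + 1 ≤ R := le_max_left _ _
      have hRr₀ : r₀ + 2 ≤ R := le_trans (le_max_left _ _) (le_max_right _ _)
      have hRx : norm x + 1 ≤ R := le_trans (le_max_right _ _) (le_max_right _ _)
      have hR0 : 0 < R := by linarith only [hRr₀, hr₀0]
      set U : Set ℂ := (W ∩ S) ∩ Metric.ball (0:ℂ) R with hUdef
      have hUS : U ⊆ S := fun y hy => hy.1.2
      have hUW : U ⊆ W := fun y hy => hy.1.1
      have hUo : IsOpen U := (hWo.inter hSo).inter Metric.isOpen_ball
      have hUb : Bornology.IsBounded U :=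
        (Metric.isBounded_ball).subset Set.inter_subset_right
      have hUball : ∀ y ∈ U, norm y < R := by
        intro y hy
        have := hy.2
        rwa [Metric.mem_ball, Complex.dist_eq, sub_zero] at this
      -- global bound for Fe on U
      have hexp_le_one : ∀ y ∈ S, Real.exp (-(lam * (Hh y).re) - ε * (Gg y).re) ≤ 1 := by
        intro y hy
        rw [Real.exp_le_one_iff]
        have h1 := mul_nonneg hlam0 (hHre0 y hy)
        have h2 := mul_nonneg hε.le (hGre0 y hy)
        linarith only [h1, h2]
      have hFele : ∀ y ∈ S, norm (Fe y) ≤ norm (f y) := by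
        intro y hy
        rw [hFeabs y]
        exact mul_le_of_le_one_right (norm_nonneg (f y)) (hexp_le_one y hy)
      have hFeB : ∀ y ∈ U, norm (Fe y) ≤ Mb R := by
        intro y hy
        refine le_trans (hFele y (hUS hy)) ?_
        refine le_trans (hfMb y (hUW hy)) ?_
        exact hMbmono (norm_nonneg y) (hUball y hy).le
      -- differentiability of Fe
      have hFed : DifferentiableOn ℂ Fe U := by
        refine DifferentiableOn.mul (hf.mono hUW) ?_
        refine DifferentiableOn.cexp ?_
        refine DifferentiableOn.sub ?_ ?_
        · refine DifferentiableOn.const_mul ?_ _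
          rw [hHdef]
          refine DifferentiableOn.cexp ?_
          refine DifferentiableOn.const_mul ?_ _
          refine DifferentiableOn.const_sub ?_ _
          intro y hy
          exact (hLgd y (hUS hy)).differentiableWithinAt
        · refine DifferentiableOn.const_mul ?_ _
          rw [hGdef]
          refine DifferentiableOn.cexp ?_
          refine DifferentiableOn.const_mul ?_ _
          intro y hy
          exact (hLgd y (hUS hy)).differentiableWithinAt
      -- boundary estimate
      have hbdy : ∀ w ∈ frontier U,
          Filter.limsup (fun y => norm (Fe y)) (nhdsWithin w U) ≤ Kt := by
        intro w hw
        have hwcl : w ∈ closure U := hw.1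
        have hnb : (nhdsWithin w U).NeBot := mem_closure_iff_nhdsWithin_neBot.1 hwcl
        have hwnU : w ∉ U := by
          rw [hUo.frontier_eq] at hw
          exact hw.2
        have hcob : Filter.IsCoboundedUnder (· ≤ ·) (nhdsWithin w U)
            (fun y => norm (Fe y)) :=
          Filter.isCoboundedUnder_le_of_le _ (fun y => norm_nonneg (Fe y))
        by_cases hwW : w ∈ W
        · -- w ∈ W : on the sphere |w| = R or the inner circle |w| = r₀
          have hwb : norm w ≤ R := by
            have h1 : w ∈ closure (Metric.ball (0:ℂ) R) :=
              closure_mono Set.inter_subset_right hwcl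
            rw [closure_ball (0:ℂ) (ne_of_gt hR0), Metric.mem_closedBall,
              Complex.dist_eq, sub_zero] at h1
            exact h1
          by_cases hwR : norm w = R
          · -- outer sphere: decay bound
            have hev : ∀ᶠ y in nhdsWithin w U, norm (Fe y) ≤ Kt := by
              filter_upwards [mem_nhdsWithin_of_mem_nhds (Metric.ball_mem_nhds w one_pos),
                self_mem_nhdsWithin] with y hy1 hyU
              have hd : norm (y - w) < 1 := by
                have := Metric.mem_ball.1 hy1
                rwa [Complex.dist_eq] at this
              have hyRε : Rε ≤ norm y := by
                have h2 : norm w - norm y ≤ norm (w - y) := by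
                  have := norm_sub_norm_le w y
                  simpa using this
                have h3 : norm (w - y) = norm (y - w) :=
                  norm_sub_rev w y
                rw [hwR] at h2
                rw [h3] at h2
                linarith only [h2, hd, hRε1]
              have hble := hRε (norm y) hyRε
              rw [hFeabs y]
              have h1 : norm (f y) ≤ Mb (norm y) := hfMb y (hUW hyU)
              have h2 : Real.exp (-(lam * (Hh y).re) - ε * (Gg y).re)
                  ≤ Real.exp (-(ε*cst) * (norm y) ^ γ) := by
                apply Real.exp_le_exp.2
                have h3 := mul_nonneg hlam0 (hHre0 y (hUS hyU))
                have h4 := mul_le_mul_of_nonneg_left (hGre_lb y (hUS hyU)) hε.le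
                have h5 : ε * (cst * norm y ^ γ) = ε * cst * norm y ^ γ := by ring
                linarith only [h3, h4, h5]
              have h5 : (0:ℝ) < Real.exp (-(ε*cst) * (norm y) ^ γ) := Real.exp_pos _
              have h6 : (0:ℝ) ≤ norm (f y) := norm_nonneg _
              calc norm (f y) * Real.exp (-(lam * (Hh y).re) - ε * (Gg y).re)
                  ≤ Mb (norm y) * Real.exp (-(ε*cst) * (norm y) ^ γ) := by
                    refine mul_le_mul h1 h2 (Real.exp_pos _).le (hMbpos _).le
              _ ≤ Kt/2 := hble.le
              _ ≤ Kt := by linarith only [hKt0, hKtdef, hε', hK0]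
            exact Filter.limsup_le_of_le hcob hev
          · -- |w| < R
            have hwltR : norm w < R := lt_of_le_of_ne hwb hwR
            have hwclS : w ∈ closure S :=
              closure_mono (fun y hy => hUS hy) hwcl
            rw [hSdef] at hwclS
            obtain ⟨hwr₀, ψ, hψle, hweq⟩ := closure_sector hellπ hwclS
            have hwpos : 0 < norm w := lt_of_lt_of_le hr₀0 hwr₀
            have hθwa : a ≤ μ + ψ := by
              have h1 := (abs_le.1 hψle).1
              linarith only [h1, hμa]
            have hθwb : μ + ψ ≤ b := by
              have h1 := (abs_le.1 hψle).2
              linarith only [h1, hμb]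
            -- endpoints are impossible since w ∈ W
            have hθwa' : a < μ + ψ := by
              rcases eq_or_lt_of_le hθwa with h | h
              · exfalso
                apply hray a haW (norm w) hwr₀
                rw [← h] at hweq
                rw [← hweq]
                exact hwW
              · exact h
            have hθwb' : μ + ψ < b := by
              rcases eq_or_lt_of_le hθwb with h | h
              · exfalso
                apply hray b hbW (norm w) hwr₀
                rw [h] at hweq
                rw [← hweq]
                exact hwW
              · exact h
            by_cases hwr : r₀ < norm w
            · -- then w ∈ U : contradiction
              exfalso
              apply hwnU
              refine ⟨⟨hwW, ?_⟩, ?_⟩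
              · rw [hweq]
                exact hmemS _ _ hwr hθwa' hθwb'
              · rw [Metric.mem_ball, Complex.dist_eq, sub_zero]
                exact hwltR
            · -- inner circle |w| = r₀ : continuity
              have hwr₀' : norm w = r₀ := le_antisymm (not_lt.1 hwr) hwr₀
              have hwS' : Complex.exp ((↑(-μ) : ℂ) * Complex.I) * w ∈ Complex.slitPlane := by
                rw [Complex.mem_slitPlane_iff_arg]
                have hargw : Complex.arg (Complex.exp ((↑(-μ) : ℂ) * Complex.I) * w)
                    = ψ := by
                  have h1 : -Real.pi < (μ + ψ) - μ := by
                    have h2 : -((b-a)/2) < ψ := by linarith only [hθwa', hμa]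
                    linarith only [h2, hellπ]
                  have h2 : (μ + ψ) - μ ≤ Real.pi := by
                    have h3 : ψ < (b-a)/2 := by linarith only [hθwb', hμb]
                    linarith only [h3, hellπ]
                  have := arg_rot_eq (θ := μ + ψ) (μ := μ) hwpos h1 h2
                  rw [← hweq] at this
                  rw [this]
                  ring
                constructor
                · rw [hargw]
                  intro h
                  have h3 : ψ < (b-a)/2 := by linarith only [hθwb', hμb]
                  linarith only [h, h3, hellπ]
                · apply mul_ne_zero (Complex.exp_ne_zero _)
                  intro h
                  rw [h] at hwpos
                  simp at hwpos
              have hargw : Complex.arg (Complex.exp ((↑(-μ) : ℂ) * Complex.I) * w) = ψ := by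
                have h1 : -Real.pi < (μ + ψ) - μ := by
                  have h2 : -((b-a)/2) < ψ := by linarith only [hθwa', hμa]
                  linarith only [h2, hellπ]
                have h2 : (μ + ψ) - μ ≤ Real.pi := by
                  have h3 : ψ < (b-a)/2 := by linarith only [hθwb', hμb]
                  linarith only [h3, hellπ]
                have := arg_rot_eq (θ := μ + ψ) (μ := μ) hwpos h1 h2
                rw [← hweq] at this
                rw [this]
                ring
              -- continuity of |Fe| at w
              have hfc : ContinuousAt f w :=
                (hf.differentiableAt (hWo.mem_nhds hwW)).continuousAt
              have hLgc : ContinuousAt Lg w := by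
                refine (continuousAt_clog hwS').comp ?_
                exact (continuous_const.mul continuous_id).continuousAt
              have hFec : ContinuousAt Fe w := by
                refine ContinuousAt.mul hfc ?_
                refine (Complex.continuous_exp.continuousAt).comp ?_
                refine ContinuousAt.sub ?_ ?_
                · refine ContinuousAt.mul continuousAt_const ?_
                  rw [hHdef]
                  refine (Complex.continuous_exp.continuousAt).comp ?_
                  exact ContinuousAt.mul continuousAt_const (ContinuousAt.sub continuousAt_const hLgc)
                · refine ContinuousAt.mul continuousAt_const ?_
                  rw [hGdef]
                  refine (Complex.continuous_exp.continuousAt).comp ?_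
                  exact ContinuousAt.mul continuousAt_const hLgc
              have htd : Filter.Tendsto (fun y => norm (Fe y)) (nhdsWithin w U)
                  (nhds (norm (Fe w))) :=
                (continuous_norm.continuousAt.comp hFec).continuousWithinAt
              rw [htd.limsup_eq]
              -- now bound |Fe w|
              have hHwre : (Hh w).re = Real.cos (γ * ψ) := by
                have h := re_H (γ := γ) hr₀0 (v := Complex.exp ((↑(-μ) : ℂ) * Complex.I) * w)
                  (by
                    apply mul_ne_zero (Complex.exp_ne_zero _)
                    intro h
                    rw [h] at hwpos
                    simp at hwpos)
                rw [habs_rot w, hargw, hwr₀', div_self (ne_of_gt hr₀0), Real.one_rpow,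
                  one_mul] at h
                exact h
              have hGwre : 0 ≤ (Gg w).re := by
                have h := re_G (γ := γ) (v := Complex.exp ((↑(-μ) : ℂ) * Complex.I) * w)
                  (by
                    apply mul_ne_zero (Complex.exp_ne_zero _)
                    intro h
                    rw [h] at hwpos
                    simp at hwpos)
                rw [habs_rot w, hargw] at h
                rw [h]
                have h1 : |γ * ψ| ≤ γ * βM / 2 := by
                  rw [abs_mul, abs_of_pos hγ0]
                  have h1a : |ψ| ≤ βM/2 := by linarith only [hψle, hellβM]
                  have h1b := mul_le_mul_of_nonneg_left h1a hγ0.le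
                  linarith only [h1b]
                have h2 : 0 ≤ Real.cos (γ * ψ) := by
                  have h3 : Real.cos (γ * βM / 2) ≤ Real.cos |γ * ψ| :=
                    Real.cos_le_cos_of_nonneg_of_le_pi (abs_nonneg _)
                      (by linarith only [hγβM, hπ]) h1
                  rw [Real.cos_abs] at h3
                  linarith only [h3, hcst]
                exact mul_nonneg (Real.rpow_nonneg hwpos.le γ) h2
              have hcosψ : cst ≤ Real.cos (γ * ψ) := by
                have h1 : |γ * ψ| ≤ γ * βM / 2 := by
                  rw [abs_mul, abs_of_pos hγ0]
                  have h1a : |ψ| ≤ βM/2 := by linarith only [hψle, hellβM]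
                  have h1b := mul_le_mul_of_nonneg_left h1a hγ0.le
                  linarith only [h1b]
                have h3 : Real.cos (γ * βM / 2) ≤ Real.cos |γ * ψ| :=
                  Real.cos_le_cos_of_nonneg_of_le_pi (abs_nonneg _)
                    (by linarith only [hγβM, hπ]) h1
                rw [Real.cos_abs] at h3
                exact h3
              rw [hFeabs w]
              have hfw : norm (f w) ≤ Mb r₀ := by
                have := hfMb w hwW
                rwa [hwr₀'] at this
              have hexp2 : Real.exp (-(lam * (Hh w).re) - ε * (Gg w).re)
                  ≤ Real.exp (-(lam * cst)) := by
                apply Real.exp_le_exp.2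
                rw [hHwre]
                have h1 := mul_le_mul_of_nonneg_left hcosψ hlam0
                have h2 := mul_nonneg hε.le hGwre
                linarith only [h1, h2]
              calc norm (f w) * Real.exp (-(lam * (Hh w).re) - ε * (Gg w).re)
                  ≤ Mb r₀ * Real.exp (-(lam * cst)) :=
                    mul_le_mul hfw hexp2 (Real.exp_pos _).le (hMbpos _).le
              _ ≤ Kt/2 := hlamKey
              _ ≤ Kt := by linarith only [hKt0, hKtdef, hε', hK0]
        · -- w ∉ W : frontier of W
          have hwfr : w ∈ frontier W := by
            refine ⟨closure_mono hUW hwcl, ?_⟩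
            rw [hWo.interior_eq]
            exact hwW
          have hbig : Filter.IsBoundedUnder (· ≤ ·) (nhdsWithin w U)
              (fun y => norm (f y)) := by
            refine ⟨Mb (norm w + 1), Filter.eventually_map.2 ?_⟩
            exact Filter.Eventually.filter_mono (nhdsWithin_mono w hUW) (hbound_near w)
          calc Filter.limsup (fun y => norm (Fe y)) (nhdsWithin w U)
              ≤ Filter.limsup (fun y => norm (f y)) (nhdsWithin w U) := by
                refine Filter.limsup_le_limsup ?_ hcob hbig
                filter_upwards [self_mem_nhdsWithin] with y hy
                exact hFele y (hUS hy)
          _ ≤ K := hlimW w hwfr U hUW hnb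
          _ ≤ Kt := hKKt
      -- apply the maximum principle
      have hxU : x ∈ U := by
        refine ⟨⟨hxW, hxS⟩, ?_⟩
        rw [Metric.mem_ball, Complex.dist_eq, sub_zero]
        linarith only [hRx]
      have := maxmod_limsup hUo hUb hFed hFeB hbdy hxU
      rwa [hFeabs x] at this
    -- let ε → 0
    have hto : Filter.Tendsto
        (fun ε : ℝ => norm (f x) * Real.exp (-(lam * (Hh x).re) - ε * (Gg x).re))
        (nhdsWithin 0 (Set.Ioi 0)) (nhds (norm (f x) *
          Real.exp (-(lam * (Hh x).re)))) := by
      have hcont : Continuous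
          (fun ε : ℝ => norm (f x) * Real.exp (-(lam * (Hh x).re) - ε * (Gg x).re)) := by
        continuity
      have h0 := hcont.tendsto 0
      simp only [zero_mul, sub_zero] at h0
      exact h0.mono_left nhdsWithin_le_nhds
    have hfinal : norm (f x) * Real.exp (-(lam * (Hh x).re)) ≤ Kt := by
      have : (nhdsWithin (0:ℝ) (Set.Ioi 0)).NeBot := by infer_instance
      refine le_of_tendsto hto ?_
      exact eventually_nhdsWithin_of_forall (fun ε hε => hεstep ε hε)
    have hHub : (Hh x).re ≤ (r₀ / norm x) ^ γ := hHre_ub x hxS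
    calc norm (f x)
        = (norm (f x) * Real.exp (-(lam * (Hh x).re)))
          * Real.exp (lam * (Hh x).re) := by
          rw [mul_assoc, ← Real.exp_add]
          simp
    _ ≤ Kt * Real.exp (lam * (Hh x).re) :=
        mul_le_mul_of_nonneg_right hfinal (Real.exp_pos _).le
    _ ≤ Kt * Real.exp (lam * (r₀ / norm x) ^ γ) := by
        refine mul_le_mul_of_nonneg_left (Real.exp_le_exp.2 ?_) hKt0.le
        exact mul_le_mul_of_nonneg_left hHub hlam0
  -- ENDGAME
  have hend : ∀ R : ℝ, max (r₀ + 1) (norm z + 1) ≤ R →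
      norm (f z) ≤ Kt * Real.exp (lam * (r₀ / R) ^ γ) := by
    intro R hR
    have hRr₀ : r₀ + 1 ≤ R := le_trans (le_max_left _ _) hR
    have hRz : norm z + 1 ≤ R := le_trans (le_max_right _ _) hR
    have hR0 : 0 < R := by linarith
    set U : Set ℂ := W ∩ Metric.ball (0:ℂ) R with hUdef
    have hUo : IsOpen U := hWo.inter Metric.isOpen_ball
    have hUb : Bornology.IsBounded U :=
      (Metric.isBounded_ball).subset Set.inter_subset_right
    have hzball : z ∈ Metric.ball (0:ℂ) R := by
      rw [Metric.mem_ball, Complex.dist_eq]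
      simp only [sub_zero]
      linarith
    refine maxmod_limsup hUo hUb (hf.mono Set.inter_subset_left) (B := Mb R) ?_ ?_
      (z := z) ⟨hz, hzball⟩
    · rintro x ⟨hxW, hxb⟩
      have : norm x ≤ R := by
        rw [Metric.mem_ball, Complex.dist_eq] at hxb
        simpa using hxb.le
      exact le_trans (hfMb x hxW) (hMbmono (norm_nonneg x) this)
    · intro w hw
      have hwcl : w ∈ closure U := hw.1
      have hnb : (nhdsWithin w U).NeBot := mem_closure_iff_nhdsWithin_neBot.1 hwcl
      by_cases hwW : w ∈ W
      · -- w is on the outer sphere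
        have hwnU : w ∉ U := by
          intro hwU
          rw [hUo.frontier_eq] at hw
          exact hw.2 hwU
        have hwb : norm w ≤ R := by
          have h1 : w ∈ closure (Metric.ball (0:ℂ) R) :=
            closure_mono Set.inter_subset_right hwcl
          rw [closure_ball (0:ℂ) (ne_of_gt hR0), Metric.mem_closedBall,
            Complex.dist_eq] at h1
          simpa using h1
        have hwR : norm w = R := by
          by_contra hne
          apply hwnU
          refine ⟨hwW, ?_⟩
          rw [Metric.mem_ball, Complex.dist_eq]
          simpa using lt_of_le_of_ne hwb hne
        have hfw : norm (f w) ≤ Kt * Real.exp (lam * (r₀ / R) ^ γ) := by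
          have := harm w hwW (by rw [hwR]; linarith)
          rwa [hwR] at this
        have hcont : Filter.Tendsto (fun y => norm (f y)) (nhdsWithin w U)
            (nhds (norm (f w))) := by
          have hfc : ContinuousAt f w := (hf.differentiableAt (hWo.mem_nhds hwW)).continuousAt
          exact (continuous_norm.continuousAt.comp hfc).continuousWithinAt
        rw [hcont.limsup_eq]
        exact hfw
      · -- w is on the frontier of W
        have hwfr : w ∈ frontier W := by
          refine ⟨closure_mono Set.inter_subset_left hwcl, ?_⟩
          rw [hWo.interior_eq]
          exact hwW
        refine le_trans (hlimW w hwfr U Set.inter_subset_left hnb) ?_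
        calc K ≤ Kt := hKKt
        _ = Kt * 1 := (mul_one Kt).symm
        _ ≤ Kt * Real.exp (lam * (r₀ / R) ^ γ) := by
            refine mul_le_mul_of_nonneg_left (Real.one_le_exp ?_) hKt0.le
            exact mul_nonneg hlam0 (Real.rpow_nonneg (div_nonneg hr₀0.le hR0.le) γ)
  -- pass to the limit R → ∞
  have htend : Filter.Tendsto (fun R : ℝ => Kt * Real.exp (lam * (r₀ / R) ^ γ))
      Filter.atTop (nhds Kt) := by
    have h1 : Filter.Tendsto (fun R : ℝ => r₀ / R) Filter.atTop (nhds 0) :=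
      tendsto_const_nhds.div_atTop Filter.tendsto_id
    have h2 : Filter.Tendsto (fun R : ℝ => (r₀ / R) ^ γ) Filter.atTop (nhds 0) := by
      have h3 := (Real.continuousAt_rpow_const 0 γ (Or.inr hγ0.le)).tendsto.comp h1
      simpa [Real.zero_rpow (ne_of_gt hγ0), Function.comp_def] using h3
    have h4 : Filter.Tendsto (fun R : ℝ => Kt * Real.exp (lam * (r₀ / R) ^ γ))
        Filter.atTop (nhds (Kt * Real.exp (lam * 0))) := by
      exact tendsto_const_nhds.mul
        ((Real.continuous_exp.tendsto _).comp (tendsto_const_nhds.mul h2))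
    simpa using h4
  have hfin : norm (f z) ≤ Kt :=
    ge_of_tendsto htend (Filter.eventually_atTop.2 ⟨max (r₀ + 1) (norm z + 1), hend⟩)
  rw [hKtdef] at hfin
  exact hfin

end
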